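/- Let k be a field, n ≥ 1, and let 𝔞_• = (𝔞_m)_{m≥1} be a graded sequence of monomial ideals in k[x_1,…,x_n]. Then P(𝔞_•) = {u ∈ ℝ_{≥0}^n : ⟨u,α⟩ ≥ val_α(𝔞_•) for all α ∈ ℝ_{≥0}^n}. -/

import Mathlib

/-- `val_α(f) = min{⟨α,u⟩ : the coefficient of x^u in f is nonzero}`. -/
noncomputable def polyVal {k : Type*} [Field k] {n : ℕ} (α : Fin n → ℝ)
    (f : MvPolynomial (Fin n) k) : ℝ :=
  sInf {x : ℝ | ∃ u ∈ f.support, x = ∑ i, α i * (u i : ℝ)}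

/-- `val_α(𝔞) = inf{val_α(f) : f ∈ 𝔞, f ≠ 0}`. -/
noncomputable def idealVal {k : Type*} [Field k] {n : ℕ} (α : Fin n → ℝ)
    (𝔞 : Ideal (MvPolynomial (Fin n) k)) : ℝ :=
  sInf {x : ℝ | ∃ f ∈ 𝔞, f ≠ 0 ∧ x = polyVal α f}

/-- A monomial ideal: an ideal generated by monomials `x^u`. -/
def IsMonomialIdeal {k : Type*} [Field k] {n : ℕ}
    (𝔞 : Ideal (MvPolynomial (Fin n) k)) : Prop :=
  ∃ T : Set (Fin n →₀ ℕ),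
    𝔞 = Ideal.span ((fun u : Fin n →₀ ℕ => MvPolynomial.monomial u (1 : k)) '' T)

/-- The Newton polyhedron `P(𝔞)` of a monomial ideal: the convex hull of the
exponent vectors of monomials lying in `𝔞`. -/
def newtonPolyhedron {k : Type*} [Field k] {n : ℕ}
    (𝔞 : Ideal (MvPolynomial (Fin n) k)) : Set (Fin n → ℝ) :=
  convexHull ℝ {u : Fin n → ℝ | ∃ β : Fin n →₀ ℕ,
    MvPolynomial.monomial β (1 : k) ∈ 𝔞 ∧ u = fun i => (β i : ℝ)}

/-- The convex region `P(𝔞_•)`: the closure of `⋃_m (1/m)·P(𝔞_m)`. -/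
def newtonRegion {k : Type*} [Field k] {n : ℕ}
    (𝔞 : ℕ → Ideal (MvPolynomial (Fin n) k)) : Set (Fin n → ℝ) :=
  closure (⋃ (m : ℕ) (_ : 1 ≤ m) (_ : 𝔞 m ≠ ⊥),
    (fun u : Fin n → ℝ => ((m : ℝ))⁻¹ • u) '' newtonPolyhedron (𝔞 m))

/-- `val_α(𝔞_•) = inf{val_α(𝔞_m)/m : m ≥ 1, 𝔞_m ≠ 0}`. -/
noncomputable def seqVal {k : Type*} [Field k] {n : ℕ} (α : Fin n → ℝ)
    (𝔞 : ℕ → Ideal (MvPolynomial (Fin n) k)) : ℝ :=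
  sInf {x : ℝ | ∃ m : ℕ, 1 ≤ m ∧ 𝔞 m ≠ ⊥ ∧ x = idealVal α (𝔞 m) / (m : ℝ)}


open MvPolynomial

section Helpers
variable {k : Type*} [Field k] {n : ℕ} {α : Fin n → ℝ}

theorem NR.mem_of_support {𝔞 : Ideal (MvPolynomial (Fin n) k)} (h : IsMonomialIdeal 𝔞)
    {f : MvPolynomial (Fin n) k} (hf : f ∈ 𝔞) {u : Fin n →₀ ℕ} (hu : u ∈ f.support) :
    MvPolynomial.monomial u (1 : k) ∈ 𝔞 := by
  obtain ⟨T, rfl⟩ := h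
  set 𝔞 := Ideal.span ((fun u : Fin n →₀ ℕ => MvPolynomial.monomial u (1 : k)) '' T) with h𝔞
  let S : Ideal (MvPolynomial (Fin n) k) :=
    { carrier := {f | ∀ u ∈ f.support, MvPolynomial.monomial u (1 : k) ∈ 𝔞}
      zero_mem' := by simp
      add_mem' := by
        intro a b ha hb u hu
        rcases Finset.mem_union.1 (MvPolynomial.support_add hu) with h | h
        · exact ha u h
        · exact hb u h
      smul_mem' := by
        intro c f hf u hu
        have := MvPolynomial.support_mul c f (by simpa using hu)
        rcases Finset.mem_add.1 this with ⟨v, hv, w, hw, rfl⟩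
        have : (MvPolynomial.monomial v (1:k)) * (MvPolynomial.monomial w (1:k)) ∈ 𝔞 :=
          Ideal.mul_mem_left _ _ (hf w hw)
        simpa [MvPolynomial.monomial_mul] using this }
  have hsub : 𝔞 ≤ S := by
    rw [h𝔞]
    refine Ideal.span_le.2 ?_
    rintro _ ⟨v, hv, rfl⟩ u hu
    classical
    rw [MvPolynomial.support_monomial] at hu
    simp only [one_ne_zero, if_false, Finset.mem_singleton] at hu
    subst hu
    exact Ideal.subset_span ⟨_, hv, rfl⟩
  exact hsub hf u hu

theorem NR.polyVal_nonneg (hα : ∀ i, 0 ≤ α i) (f : MvPolynomial (Fin n) k) :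
    0 ≤ polyVal α f := by
  apply Real.sInf_nonneg
  rintro x ⟨u, hu, rfl⟩
  exact Finset.sum_nonneg fun i _ => mul_nonneg (hα i) (Nat.cast_nonneg _)

theorem NR.polyVal_monomial (β : Fin n →₀ ℕ) :
    polyVal α (MvPolynomial.monomial β (1 : k)) = ∑ i, α i * (β i : ℝ) := by
  classical
  have : {x : ℝ | ∃ u ∈ (MvPolynomial.monomial β (1 : k)).support, x = ∑ i, α i * (u i : ℝ)}
      = {∑ i, α i * (β i : ℝ)} := by
    ext x
    simp [MvPolynomial.support_monomial]
  rw [polyVal, this, csInf_singleton]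

theorem NR.idealVal_nonneg (hα : ∀ i, 0 ≤ α i) (𝔞 : Ideal (MvPolynomial (Fin n) k)) :
    0 ≤ idealVal α 𝔞 := by
  apply Real.sInf_nonneg
  rintro x ⟨f, _, _, rfl⟩
  exact NR.polyVal_nonneg hα f

theorem NR.idealVal_le_polyVal (hα : ∀ i, 0 ≤ α i) {𝔞 : Ideal (MvPolynomial (Fin n) k)}
    {f : MvPolynomial (Fin n) k} (hf : f ∈ 𝔞) (hf0 : f ≠ 0) :
    idealVal α 𝔞 ≤ polyVal α f :=
  csInf_le ⟨0, by rintro x ⟨g, _, _, rfl⟩; exact NR.polyVal_nonneg hα g⟩ ⟨f, hf, hf0, rfl⟩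

theorem NR.le_polyVal {c : ℝ} {f : MvPolynomial (Fin n) k} (hf : f ≠ 0)
    (h : ∀ u ∈ f.support, c ≤ ∑ i, α i * (u i : ℝ)) : c ≤ polyVal α f := by
  apply le_csInf
  · obtain ⟨u, hu⟩ := Finset.nonempty_iff_ne_empty.2
      (fun h => hf (MvPolynomial.support_eq_empty.mp h))
    exact ⟨_, u, hu, rfl⟩
  · rintro x ⟨u, hu, rfl⟩; exact h u hu

theorem NR.newtonPolyhedron_mono {𝔞 𝔟 : Ideal (MvPolynomial (Fin n) k)} (h : 𝔞 ≤ 𝔟) :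
    newtonPolyhedron 𝔞 ⊆ newtonPolyhedron 𝔟 :=
  convexHull_mono (by rintro u ⟨β, hβ, rfl⟩; exact ⟨β, h hβ, rfl⟩)

theorem NR.smul_mem_newtonPolyhedron_pow {𝔞 : Ideal (MvPolynomial (Fin n) k)} (q : ℕ)
    {v : Fin n → ℝ} (hv : v ∈ newtonPolyhedron 𝔞) :
    (q : ℝ) • v ∈ newtonPolyhedron (𝔞 ^ q) := by
  revert v
  have hconv : Convex ℝ {v : Fin n → ℝ | (q : ℝ) • v ∈ newtonPolyhedron (𝔞 ^ q)} := by
    intro x hx y hy a b ha hb hab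
    have : (q:ℝ) • (a • x + b • y) = a • ((q:ℝ) • x) + b • ((q:ℝ) • y) := by
      rw [smul_add, smul_comm (q:ℝ) a, smul_comm (q:ℝ) b]
    simp only [Set.mem_setOf_eq, this]
    exact (convex_convexHull ℝ _) hx hy ha hb hab
  intro v hv
  refine convexHull_min ?_ hconv hv
  rintro u ⟨β, hβ, rfl⟩
  refine subset_convexHull ℝ _ ⟨q • β, ?_, ?_⟩
  · have : (MvPolynomial.monomial β (1:k)) ^ q ∈ 𝔞 ^ q := Ideal.pow_mem_pow hβ q
    simpa [MvPolynomial.monomial_pow] using this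
  · funext j
    simp [Pi.smul_apply, Finsupp.smul_apply, mul_comm]

theorem NR.add_single_mem_newtonPolyhedron {𝔞 : Ideal (MvPolynomial (Fin n) k)}
    {v : Fin n → ℝ} (hv : v ∈ newtonPolyhedron 𝔞) (i : Fin n) {t : ℝ} (ht : 0 ≤ t) :
    (v + fun j => if i = j then t else 0) ∈ newtonPolyhedron 𝔞 := by
  classical
  have hnat : ∀ N : ℕ, ∀ w ∈ newtonPolyhedron 𝔞,
      (w + fun j => if i = j then (N : ℝ) else 0) ∈ newtonPolyhedron 𝔞 := by
    intro N w hw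
    have hconv : Convex ℝ {w : Fin n → ℝ |
        (w + fun j => if i = j then (N : ℝ) else 0) ∈ newtonPolyhedron 𝔞} := by
      intro x hx y hy a b ha hb hab
      have : (a • x + b • y) + (fun j => if i = j then (N : ℝ) else 0)
          = a • (x + fun j => if i = j then (N : ℝ) else 0)
            + b • (y + fun j => if i = j then (N : ℝ) else 0) := by
        funext j
        simp only [Pi.add_apply, Pi.smul_apply, smul_eq_mul]
        have : a * N + b * N = N := by rw [← add_mul, hab, one_mul]
        by_cases h : i = j <;> simp [h] <;> nlinarith [this]
      simp only [Set.mem_setOf_eq, this]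
      exact (convex_convexHull ℝ _) hx hy ha hb hab
    refine convexHull_min ?_ hconv hw
    rintro u ⟨β, hβ, rfl⟩
    refine subset_convexHull ℝ _ ⟨β + N • Finsupp.single i 1, ?_, ?_⟩
    · have : (MvPolynomial.monomial β (1:k))
          * (MvPolynomial.monomial (N • Finsupp.single i 1) (1:k)) ∈ 𝔞 :=
        Ideal.mul_mem_right _ _ hβ
      simpa [MvPolynomial.monomial_mul] using this
    · funext j
      by_cases h : i = j <;> simp [h, Finsupp.single_apply]
  rcases eq_or_lt_of_le ht with rfl | ht'
  · have h0 : (v + fun j => if i = j then (0:ℝ) else 0) = v := by funext j; simp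
    rw [h0]; exact hv
  set N : ℕ := ⌈t⌉₊ with hN
  have hNt : t ≤ N := Nat.le_ceil t
  have hN0 : (0:ℝ) < N := lt_of_lt_of_le ht' hNt
  set s : ℝ := t / N with hs
  have hs0 : 0 ≤ s := div_nonneg ht (le_of_lt hN0)
  have hs1 : s ≤ 1 := by rw [hs, div_le_one hN0]; exact hNt
  have hkey : v + (fun j => if i = j then t else 0)
      = (1 - s) • v + s • (v + fun j => if i = j then (N : ℝ) else 0) := by
    funext j
    simp only [Pi.add_apply, Pi.smul_apply, smul_eq_mul]
    by_cases h : i = j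
    · simp only [if_pos h]
      rw [hs]; field_simp; ring
    · simp only [if_neg h, add_zero]
      ring
  rw [hkey]
  exact (convex_convexHull ℝ _) hv (hnat N v hv) (by linarith) hs0 (by ring)

end Helpers

/-- Second assertion (equation (8.3)) of Lemma 8.2: the convex region
`P(𝔞_•)` of a graded sequence of monomial ideals is determined by the
function `α ↦ val_α(𝔞_•)`:
`P(𝔞_•) = {u ∈ ℝ_{≥0}^n : ⟨u,α⟩ ≥ val_α(𝔞_•) for all α ∈ ℝ_{≥0}^n}`. -/
theorem newtonRegion_eq_of_seqVal {k : Type*} [Field k] {n : ℕ} (hn : 1 ≤ n)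
    (𝔞 : ℕ → Ideal (MvPolynomial (Fin n) k))
    (hmono : ∀ m : ℕ, 1 ≤ m → IsMonomialIdeal (𝔞 m))
    (hgraded : ∀ p q : ℕ, 1 ≤ p → 1 ≤ q → 𝔞 p * 𝔞 q ≤ 𝔞 (p + q))
    (hnz : ∃ m : ℕ, 1 ≤ m ∧ 𝔞 m ≠ ⊥) :
    newtonRegion 𝔞 = {u : Fin n → ℝ | (∀ i, 0 ≤ u i) ∧
      ∀ α : Fin n → ℝ, (∀ i, 0 ≤ α i) → seqVal α 𝔞 ≤ ∑ i, u i * α i} := by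
  classical
  set U : Set (Fin n → ℝ) := ⋃ (m : ℕ) (_ : 1 ≤ m) (_ : 𝔞 m ≠ ⊥),
    (fun u : Fin n → ℝ => ((m : ℝ))⁻¹ • u) '' newtonPolyhedron (𝔞 m) with hU
  have hregion : newtonRegion 𝔞 = closure U := rfl
  -- extracting a monomial from a nonzero monomial ideal
  have hmonex : ∀ m : ℕ, 1 ≤ m → 𝔞 m ≠ ⊥ →
      ∃ β : Fin n →₀ ℕ, MvPolynomial.monomial β (1:k) ∈ 𝔞 m := by
    intro m hm hne
    obtain ⟨f, hf, hf0⟩ := Submodule.exists_mem_ne_zero_of_ne_bot hne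
    obtain ⟨β, hβ⟩ := Finset.nonempty_iff_ne_empty.2
      (fun h => hf0 (MvPolynomial.support_eq_empty.mp h))
    exact ⟨β, NR.mem_of_support (hmono m hm) hf hβ⟩
  -- graded power
  have powLe : ∀ p q : ℕ, 1 ≤ p → 1 ≤ q → 𝔞 p ^ q ≤ 𝔞 (p * q) := by
    intro p q hp hq
    induction q with
    | zero => exact absurd hq (by omega)
    | succ q ih =>
      by_cases hq0 : q = 0
      · subst hq0; simpa using le_refl (𝔞 p)
      · have hq1 : 1 ≤ q := Nat.one_le_iff_ne_zero.2 hq0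
        calc 𝔞 p ^ (q+1) = 𝔞 p ^ q * 𝔞 p := pow_succ _ _
          _ ≤ 𝔞 (p*q) * 𝔞 p := Ideal.mul_mono_left (ih hq1)
          _ ≤ 𝔞 (p*q + p) := hgraded (p*q) p (Nat.one_le_iff_ne_zero.2
              (Nat.mul_ne_zero (by omega) hq0)) hp
          _ = 𝔞 (p*(q+1)) := by rw [Nat.mul_succ]
  -- scaling inclusion
  have scale : ∀ p q : ℕ, 1 ≤ p → 1 ≤ q →
      (fun u : Fin n → ℝ => ((p : ℝ))⁻¹ • u) '' newtonPolyhedron (𝔞 p) ⊆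
      (fun u : Fin n → ℝ => (((p*q : ℕ) : ℝ))⁻¹ • u) '' newtonPolyhedron (𝔞 (p*q)) := by
    intro p q hp hq
    rintro x ⟨v, hv, rfl⟩
    refine ⟨(q:ℝ) • v, NR.newtonPolyhedron_mono (powLe p q hp hq)
      (NR.smul_mem_newtonPolyhedron_pow q hv), ?_⟩
    have hp0 : ((p:ℝ)) ≠ 0 := Nat.cast_ne_zero.2 (by omega)
    have hq0 : ((q:ℝ)) ≠ 0 := Nat.cast_ne_zero.2 (by omega)
    show ((p*q : ℕ):ℝ)⁻¹ • ((q:ℝ) • v) = ((p:ℝ))⁻¹ • v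
    rw [smul_smul]
    congr 1
    push_cast
    field_simp
  -- convexity of U
  have hUconv : Convex ℝ U := by
    intro x hx y hy a b ha hb hab
    simp only [hU, Set.mem_iUnion] at hx hy ⊢
    obtain ⟨p, hp, hpne, hx⟩ := hx
    obtain ⟨q, hq, hqne, hy⟩ := hy
    have hx' := scale p q hp hq hx
    have hy' := scale q p hq hp hy
    rw [Nat.mul_comm q p] at hy'
    have hpq : 1 ≤ p * q := Nat.one_le_iff_ne_zero.2 (Nat.mul_ne_zero (by omega) (by omega))
    have hpqne : 𝔞 (p*q) ≠ ⊥ := by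
      obtain ⟨β, hβ⟩ := hmonex p hp hpne
      have hmem : MvPolynomial.monomial (q • β) (1:k) ∈ 𝔞 (p*q) := by
        apply powLe p q hp hq
        simpa [MvPolynomial.monomial_pow] using Ideal.pow_mem_pow hβ q
      intro hbot
      rw [hbot, Ideal.mem_bot] at hmem
      exact one_ne_zero (MvPolynomial.monomial_eq_zero.mp hmem)
    refine ⟨p*q, hpq, hpqne, ?_⟩
    have hconvW : Convex ℝ ((fun u : Fin n → ℝ => (((p*q:ℕ):ℝ))⁻¹ • u) ''
        newtonPolyhedron (𝔞 (p*q))) := by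
      rw [Set.image_smul]
      exact (convex_convexHull ℝ _).smul _
    exact hconvW hx' hy' ha hb hab
  -- U is upward closed
  have hUup : ∀ i : Fin n, ∀ t : ℝ, 0 ≤ t → ∀ x ∈ U,
      (x + fun j => if i = j then t else 0) ∈ U := by
    intro i t ht x hx
    simp only [hU, Set.mem_iUnion] at hx ⊢
    obtain ⟨m, hm, hne, v, hv, rfl⟩ := hx
    refine ⟨m, hm, hne, v + (fun j => if i = j then (m:ℝ)*t else 0),
      NR.add_single_mem_newtonPolyhedron hv i (mul_nonneg (Nat.cast_nonneg _) ht), ?_⟩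
    have hm0 : ((m:ℝ)) ≠ 0 := Nat.cast_ne_zero.2 (by omega)
    funext j
    simp only [Pi.add_apply, Pi.smul_apply, smul_eq_mul]
    by_cases h : i = j
    · simp only [if_pos h]; field_simp
    · simp only [if_neg h]; ring
  rw [hregion]
  apply Set.Subset.antisymm
  · -- closure U ⊆ RHS
    have hclosed : IsClosed {u : Fin n → ℝ | (∀ i, 0 ≤ u i) ∧
        ∀ α : Fin n → ℝ, (∀ i, 0 ≤ α i) → seqVal α 𝔞 ≤ ∑ i, u i * α i} := by
      have h1 : IsClosed {u : Fin n → ℝ | ∀ i, 0 ≤ u i} := by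
        have : {u : Fin n → ℝ | ∀ i, 0 ≤ u i} = ⋂ i, {u | 0 ≤ u i} := by ext; simp
        rw [this]
        exact isClosed_iInter fun i => isClosed_le continuous_const (continuous_apply i)
      have h2 : IsClosed {u : Fin n → ℝ |
          ∀ α : Fin n → ℝ, (∀ i, 0 ≤ α i) → seqVal α 𝔞 ≤ ∑ i, u i * α i} := by
        have : {u : Fin n → ℝ | ∀ α : Fin n → ℝ, (∀ i, 0 ≤ α i) → seqVal α 𝔞 ≤ ∑ i, u i * α i}
            = ⋂ (α : Fin n → ℝ) (_ : ∀ i, 0 ≤ α i), {u | seqVal α 𝔞 ≤ ∑ i, u i * α i} := by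
          ext; simp
        rw [this]
        refine isClosed_iInter fun α => isClosed_iInter fun hα => isClosed_le
          continuous_const ?_
        exact continuous_finset_sum _ fun i _ => (continuous_apply i).mul continuous_const
      have : {u : Fin n → ℝ | (∀ i, 0 ≤ u i) ∧
          ∀ α : Fin n → ℝ, (∀ i, 0 ≤ α i) → seqVal α 𝔞 ≤ ∑ i, u i * α i}
          = {u : Fin n → ℝ | ∀ i, 0 ≤ u i} ∩ {u : Fin n → ℝ |
          ∀ α : Fin n → ℝ, (∀ i, 0 ≤ α i) → seqVal α 𝔞 ≤ ∑ i, u i * α i} := rfl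
      rw [this]
      exact h1.inter h2
    apply closure_minimal ?_ hclosed
    rintro x hx
    simp only [hU, Set.mem_iUnion] at hx
    obtain ⟨m, hm, hne, v, hv, rfl⟩ := hx
    have hm0 : (0:ℝ) < m := by exact_mod_cast Nat.lt_of_lt_of_le Nat.zero_lt_one hm
    -- membership of v in the half-space description for 𝔞 m
    have hvQ : v ∈ {w : Fin n → ℝ | (∀ i, 0 ≤ w i) ∧
        ∀ α : Fin n → ℝ, (∀ i, 0 ≤ α i) → idealVal α (𝔞 m) ≤ ∑ i, α i * w i} := by
      refine convexHull_min ?_ ?_ hv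
      · rintro w ⟨β, hβ, rfl⟩
        constructor
        · intro i; exact Nat.cast_nonneg _
        · intro α hα
          have hne0 : (MvPolynomial.monomial β (1:k)) ≠ 0 := by
            simp [MvPolynomial.monomial_eq_zero]
          calc idealVal α (𝔞 m) ≤ polyVal α (MvPolynomial.monomial β (1:k)) :=
                NR.idealVal_le_polyVal hα hβ hne0
            _ = ∑ i, α i * (β i : ℝ) := NR.polyVal_monomial β
      · intro x hx y hy a b ha hb hab
        constructor
        · intro i
          simp only [Pi.add_apply, Pi.smul_apply, smul_eq_mul]
          exact add_nonneg (mul_nonneg ha (hx.1 i)) (mul_nonneg hb (hy.1 i))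
        · intro α hα
          have hsum : ∑ i, α i * (a • x + b • y) i
              = a * (∑ i, α i * x i) + b * (∑ i, α i * y i) := by
            rw [Finset.mul_sum, Finset.mul_sum, ← Finset.sum_add_distrib]
            apply Finset.sum_congr rfl
            intro i _
            simp only [Pi.add_apply, Pi.smul_apply, smul_eq_mul]
            ring
          rw [hsum]
          have h1 := mul_le_mul_of_nonneg_left (hx.2 α hα) ha
          have h2 := mul_le_mul_of_nonneg_left (hy.2 α hα) hb
          calc idealVal α (𝔞 m) = a * idealVal α (𝔞 m) + b * idealVal α (𝔞 m) := by
                rw [← add_mul, hab, one_mul]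
            _ ≤ a * (∑ i, α i * x i) + b * (∑ i, α i * y i) := add_le_add h1 h2
    constructor
    · intro i
      simp only [Pi.smul_apply, smul_eq_mul]
      exact mul_nonneg (inv_nonneg.2 (le_of_lt hm0)) (hvQ.1 i)
    · intro α hα
      have hseq : seqVal α 𝔞 ≤ idealVal α (𝔞 m) / m := by
        apply csInf_le
        · refine ⟨0, ?_⟩
          rintro x ⟨m', hm', hne', rfl⟩
          exact div_nonneg (NR.idealVal_nonneg hα _) (Nat.cast_nonneg _)
        · exact ⟨m, hm, hne, rfl⟩
      have hsum : ∑ i, ((m:ℝ)⁻¹ • v) i * α i = (∑ i, α i * v i) / m := by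
        rw [Finset.sum_div]
        apply Finset.sum_congr rfl
        intro i _
        simp only [Pi.smul_apply, smul_eq_mul]
        field_simp
      rw [hsum]
      calc seqVal α 𝔞 ≤ idealVal α (𝔞 m) / m := hseq
        _ ≤ (∑ i, α i * v i) / m := (div_le_div_iff_of_pos_right hm0).2 (hvQ.2 α hα)
  · -- RHS ⊆ closure U
    intro u hu
    by_contra hC
    obtain ⟨φ, s, hφu, hφC⟩ := geometric_hahn_banach_point_closed
      (hUconv.closure) isClosed_closure hC
    set α : Fin n → ℝ := fun i => φ (fun j => if i = j then 1 else 0) with hαdef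
    have hφ : ∀ x : Fin n → ℝ, φ x = ∑ i, x i * α i := by
      intro x
      conv_lhs => rw [pi_eq_sum_univ x]
      rw [map_sum]
      apply Finset.sum_congr rfl
      intro i _
      rw [map_smul, smul_eq_mul]
    -- C is nonempty
    obtain ⟨m₀, hm₀, hne₀⟩ := hnz
    obtain ⟨β₀, hβ₀⟩ := hmonex m₀ hm₀ hne₀
    have hx₀U : ((m₀:ℝ)⁻¹ • fun i => ((β₀ i : ℕ) : ℝ)) ∈ U := by
      simp only [hU, Set.mem_iUnion]
      exact ⟨m₀, hm₀, hne₀, _, subset_convexHull ℝ _ ⟨β₀, hβ₀, rfl⟩, rfl⟩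
    set x₀ : Fin n → ℝ := (m₀:ℝ)⁻¹ • fun i => ((β₀ i : ℕ) : ℝ) with hx₀def
    have hx₀C : x₀ ∈ closure U := subset_closure hx₀U
    -- α is nonnegative
    have hα : ∀ i, 0 ≤ α i := by
      intro i
      by_contra hi
      push_neg at hi
      set t : ℝ := max 0 ((s - φ x₀ - 1) / α i) with htdef
      have ht0 : 0 ≤ t := le_max_left _ _
      have htq : (s - φ x₀ - 1) / α i ≤ t := le_max_right _ _
      have hmem : (x₀ + fun j => if i = j then t else 0) ∈ closure U := by
        have hcont : Continuous (fun x : Fin n → ℝ => x + fun j => if i = j then t else 0) :=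
          continuous_id.add continuous_const
        exact map_mem_closure (f := fun x : Fin n → ℝ => x + fun j => if i = j then t else 0)
          hcont hx₀C (fun x hx => hUup i t ht0 x hx)
      have hgt := hφC _ hmem
      rw [map_add] at hgt
      have hφe : φ (fun j => if i = j then t else 0) = t * α i := by
        rw [hφ]
        rw [Finset.sum_eq_single i]
        · simp
        · intro b _ hb
          simp [Ne.symm hb]
        · simp
      rw [hφe] at hgt
      have hta : t * α i ≤ s - φ x₀ - 1 := by
        have := mul_le_mul_of_nonpos_right htq (le_of_lt hi)
        rwa [div_mul_cancel₀ _ (ne_of_lt hi)] at this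
      linarith
    -- s ≤ seqVal α 𝔞
    have hsle : s ≤ seqVal α 𝔞 := by
      apply le_csInf
      · exact ⟨_, m₀, hm₀, hne₀, rfl⟩
      · rintro x ⟨m, hm, hne, rfl⟩
        have hm0 : (0:ℝ) < m := by exact_mod_cast Nat.lt_of_lt_of_le Nat.zero_lt_one hm
        rw [le_div_iff₀ hm0]
        obtain ⟨f, hf, hf0⟩ := Submodule.exists_mem_ne_zero_of_ne_bot hne
        apply le_csInf
        · exact ⟨_, f, hf, hf0, rfl⟩
        · rintro x ⟨g, hg, hg0, rfl⟩
          apply NR.le_polyVal hg0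
          intro β hβ
          have hβmem : MvPolynomial.monomial β (1:k) ∈ 𝔞 m :=
            NR.mem_of_support (hmono m hm) hg hβ
          have hβU : ((m:ℝ)⁻¹ • fun i => ((β i : ℕ) : ℝ)) ∈ U := by
            simp only [hU, Set.mem_iUnion]
            exact ⟨m, hm, hne, _, subset_convexHull ℝ _ ⟨β, hβmem, rfl⟩, rfl⟩
          have hgt := hφC _ (subset_closure hβU)
          rw [hφ] at hgt
          have hsum : ∑ i, ((m:ℝ)⁻¹ • fun i => ((β i : ℕ) : ℝ)) i * α i
              = (m:ℝ)⁻¹ * ∑ i, α i * (β i : ℝ) := by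
            rw [Finset.mul_sum]
            apply Finset.sum_congr rfl
            intro i _
            simp only [Pi.smul_apply, smul_eq_mul]
            ring
          rw [hsum] at hgt
          rw [← div_eq_inv_mul] at hgt
          have h2 : (m:ℝ) * s < ∑ i, α i * (β i : ℝ) := (lt_div_iff₀' hm0).1 hgt
          calc s * (m:ℝ) = (m:ℝ) * s := mul_comm _ _
            _ ≤ ∑ i, α i * (β i : ℝ) := le_of_lt h2
    have hfin := hu.2 α hα
    rw [← hφ u] at hfin
    linarith
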